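/- Fix h : ℕ, k ≥ 1, and intervals x_1, …, x_k with x_j = {m ∈ ℕ : a_j ≤ m < b_j} where a_j < b_j ≤ 2^h. Then ⋂_{j ∈ [k]} x_j ≠ ∅ if and only if there exist a permutation σ of [k] and bitstrings u_1, …, u_k such that: u_j is a prefix of u_{j+1} for every 1 ≤ j < k; u_j ∈ CP_h(a_{σ(j)}, b_{σ(j)}) for every 1 ≤ j ≤ k − 1; and u_k has length h with val(u_k) = a_{σ(k)}. -/

import Mathlib

/-
If the intervals meet, their intersection starts at `m = max_j a_j`. On the root-to-leaf path
of `m` in the segment tree, every interval `x_j` owns exactly one node of its canonical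
partition: the shallowest ancestor of `m` whose segment lies in `x_j`. Listing these nodes by
depth, with an interval whose left endpoint is `m` put last at the leaf itself, gives the chain.
Conversely, the leaf ending a chain lies in the segment of every node above it, hence in every
interval of the chain.
-/

/-- The value of a bitstring (most significant bit first):
`val [] = 0` and `val (u ++ [b]) = 2 * val u + (if b then 1 else 0)`. -/
def bitVal (u : List Bool) : ℕ :=
  u.foldl (fun n b => 2 * n + (if b then 1 else 0)) 0

/-- The segment of a bitstring `u` (with `|u| ≤ h`) in the perfect segment tree of
height `h`: `seg_h(u) = {m : val u · 2^(h−|u|) ≤ m < (val u + 1) · 2^(h−|u|)}`. -/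
def seg (h : ℕ) (u : List Bool) : Set ℕ :=
  {m | bitVal u * 2 ^ (h - u.length) ≤ m ∧ m < (bitVal u + 1) * 2 ^ (h - u.length)}

/-- The canonical partition `CP_h(a, b)` of the interval `{m : a ≤ m < b}` in the
perfect segment tree of height `h`: the bitstrings `u` with `|u| ≤ h` whose segment is
contained in `[a, b)` and such that no proper prefix of `u` has its segment contained
in `[a, b)`. -/
def CP (h a b : ℕ) : Set (List Bool) :=
  {u | u.length ≤ h ∧ seg h u ⊆ Set.Ico a b ∧
    ∀ u' : List Bool, u' <+: u → u' ≠ u → ¬ seg h u' ⊆ Set.Ico a b}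

lemma bitVal_append_singleton (u : List Bool) (c : Bool) :
    bitVal (u ++ [c]) = 2 * bitVal u + c.toNat := by
  cases c <;> simp [bitVal, List.foldl_append]

lemma bitVal_append (u v : List Bool) :
    bitVal (u ++ v) = bitVal u * 2 ^ v.length + bitVal v := by
  induction v using List.reverseRecOn with
  | nil => simp [bitVal]
  | append_singleton v c ih =>
    rw [← List.append_assoc, bitVal_append_singleton, ih, bitVal_append_singleton,
      List.length_append, List.length_singleton, pow_succ]
    ring

lemma bitVal_lt (u : List Bool) : bitVal u < 2 ^ u.length := by
  induction u using List.reverseRecOn with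
  | nil => simp [bitVal]
  | append_singleton u c ih =>
    rw [bitVal_append_singleton, List.length_append, List.length_singleton, pow_succ]
    have := Bool.toNat_le c
    omega

lemma exists_length_eq_bitVal_eq {h m : ℕ} (hm : m < 2 ^ h) :
    ∃ w : List Bool, w.length = h ∧ bitVal w = m := by
  induction h generalizing m with
  | zero => exact ⟨[], rfl, by simp_all [bitVal]⟩
  | succ h ih =>
    obtain ⟨w, hlen, hval⟩ := ih (m := m / 2) (by rw [pow_succ] at hm; omega)
    refine ⟨w ++ [decide (m % 2 = 1)], by simp [hlen], ?_⟩
    rw [bitVal_append_singleton, hval]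
    rcases Nat.mod_two_eq_zero_or_one m with h2 | h2 <;> simp [h2] <;> omega

lemma seg_of_length_eq {h : ℕ} {w : List Bool} (hw : w.length = h) : seg h w = {bitVal w} := by
  ext m
  simp only [seg, hw, Nat.sub_self, pow_zero, mul_one, Set.mem_ofPred_eq, Set.mem_singleton_iff]
  omega

lemma seg_subset_seg_of_prefix {h : ℕ} {u v : List Bool} (hv : v.length ≤ h) (huv : u <+: v) :
    seg h v ⊆ seg h u := by
  obtain ⟨t, rfl⟩ := huv
  rintro m ⟨hlo, hhi⟩
  rw [List.length_append] at hv
  simp only [bitVal_append, List.length_append] at hlo hhi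
  set r := h - (u.length + t.length)
  have hsplit : 2 ^ (h - u.length) = 2 ^ t.length * 2 ^ r := by
    rw [← pow_add]; congr 1; omega
  have ht := bitVal_lt t
  constructor
  · calc bitVal u * 2 ^ (h - u.length) = bitVal u * 2 ^ t.length * 2 ^ r := by
          rw [hsplit, mul_assoc]
      _ ≤ (bitVal u * 2 ^ t.length + bitVal t) * 2 ^ r := by gcongr; omega
      _ ≤ m := hlo
  · calc m < (bitVal u * 2 ^ t.length + bitVal t + 1) * 2 ^ r := hhi
      _ ≤ (bitVal u + 1) * 2 ^ t.length * 2 ^ r := by gcongr; rw [add_one_mul]; omega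
      _ = (bitVal u + 1) * 2 ^ (h - u.length) := by rw [hsplit, mul_assoc]

lemma exists_take_mem_CP {h a b : ℕ} {w : List Bool} (hw : w.length ≤ h)
    (hwab : seg h w ⊆ Set.Ico a b) : ∃ n, w.take n ∈ CP h a b := by
  classical
  have hex : ∃ n, seg h (w.take n) ⊆ Set.Ico a b := ⟨w.length, by rwa [List.take_length]⟩
  refine ⟨Nat.find hex, ?_, Nat.find_spec hex, fun u hu hne hsub => ?_⟩
  · simp only [List.length_take]
    exact (min_le_right _ _).trans hw
  · have hlt : u.length < Nat.find hex := by
      have hle := hu.length_le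
      have hne_len := mt hu.eq_of_length hne
      rw [List.length_take] at hle hne_len
      omega
    have hu_eq : u = w.take u.length := by
      have := List.prefix_iff_eq_take.1 hu
      rwa [List.take_take, min_eq_left hlt.le] at this
    exact Nat.find_min hex hlt (hu_eq ▸ hsub)

lemma mem_Ico_of_prefix_mem_CP {h a b : ℕ} {u w : List Bool} (hu : u ∈ CP h a b) (huw : u <+: w)
    (hw : w.length = h) : bitVal w ∈ Set.Ico a b :=
  hu.2.1 (seg_subset_seg_of_prefix hw.le huw (by rw [seg_of_length_eq hw]; rfl))

lemma exists_perm_apply_last_eq_monotone {α : Type*} [LinearOrder α] {n : ℕ}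
    (f : Fin (n + 1) → α) (j₀ : Fin (n + 1)) :
    ∃ σ : Equiv.Perm (Fin (n + 1)), σ (Fin.last n) = j₀ ∧
      ∀ i j, i ≤ j → j ≠ Fin.last n → f (σ i) ≤ f (σ j) := by
  classical
  -- Sorting by this key puts `j₀` last and sorts the other indices by `f`.
  let key : Fin (n + 1) → Bool ×ₗ α := fun j => toLex (decide (j = j₀), f j)
  have hmono := Tuple.monotone_sort key
  set σ := Tuple.sort key
  have hlast : σ (Fin.last n) = j₀ := by
    have hle := hmono (Fin.le_last (σ.symm j₀))
    simp only [Function.comp_apply, Equiv.apply_symm_apply, key,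
      Prod.Lex.toLex_le_toLex, decide_true] at hle
    rcases hle with hlt | ⟨heq, -⟩
    · exact absurd hlt (not_lt.2 (Bool.le_true _))
    · exact of_decide_eq_true heq.symm
  refine ⟨σ, hlast, fun i j hij hj => ?_⟩
  have hne : ∀ l, l ≠ Fin.last n → σ l ≠ j₀ := fun l hl hσl =>
    hl (σ.injective (hσl.trans hlast.symm))
  have hle := hmono hij
  simp only [Function.comp_apply, key, Prod.Lex.toLex_le_toLex, hne j hj,
    hne i (hij.trans_lt (lt_of_le_of_ne (Fin.le_last j) hj)).ne, decide_false,
    lt_self_iff_false, true_and, false_or] at hle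
  exact hle

lemma prefix_of_le_of_chain {α : Type*} {k : ℕ} {u : Fin k → List α}
    (hu : ∀ j : ℕ, (hj : j + 1 < k) → u ⟨j, Nat.lt_of_succ_lt hj⟩ <+: u ⟨j + 1, hj⟩)
    {i j : Fin k} (hij : i ≤ j) : u i <+: u j := by
  obtain ⟨j, hj⟩ := j
  induction j with
  | zero => rw [show i = ⟨0, hj⟩ from le_antisymm hij (Fin.le_def.2 (Nat.zero_le _))]
  | succ j ih =>
    have hij' : (i : ℕ) ≤ j + 1 := hij
    by_cases hi : (i : ℕ) = j + 1
    · rw [show i = ⟨j + 1, hj⟩ from Fin.ext hi]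
    · exact (ih (by omega) (show (i : ℕ) ≤ j by omega)).trans (hu j hj)

/-- (Intersection Predicate Rewriting 2, dyadic form.) Fix `h`,
`k ≥ 1`, and intervals `x j = {m : a j ≤ m < b j}` with `a j < b j ≤ 2^h`. Then
`⋂ j, x j ≠ ∅` iff there exist a permutation `σ` of `{0, …, k−1}` and bitstrings
`u 0, …, u (k−1)` such that each `u j` is a prefix of `u (j+1)`, each `u j` with
`j < k − 1` belongs to `CP_h(a (σ j), b (σ j))`, and the last bitstring `u (k−1)` is
a leaf (length `h`) with value `a (σ (k−1))`. -/
theorem intersection_nonempty_iff_ordered_chain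
    (h k : ℕ) (hk : 1 ≤ k) (a b : Fin k → ℕ)
    (hab : ∀ j, a j < b j) (hb : ∀ j, b j ≤ 2 ^ h) :
    (⋂ j, Set.Ico (a j) (b j)).Nonempty ↔
      ∃ (σ : Equiv.Perm (Fin k)) (u : Fin k → List Bool),
        (∀ j : ℕ, (hj : j + 1 < k) →
          u ⟨j, by omega⟩ <+: u ⟨j + 1, hj⟩) ∧
        (∀ j : ℕ, (hj : j + 1 < k) →
          u ⟨j, by omega⟩ ∈ CP h (a (σ ⟨j, by omega⟩)) (b (σ ⟨j, by omega⟩))) ∧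
        (u ⟨k - 1, by omega⟩).length = h ∧
        bitVal (u ⟨k - 1, by omega⟩) = a (σ ⟨k - 1, by omega⟩) := by
  constructor
  · rintro ⟨t, ht⟩
    obtain ⟨n, rfl⟩ : ∃ n, k = n + 1 := ⟨k - 1, by omega⟩
    rw [Set.mem_iInter] at ht
    obtain ⟨j₀, hj₀⟩ := Finite.exists_max a
    have hmem : ∀ j, a j₀ ∈ Set.Ico (a j) (b j) := fun j =>
      ⟨hj₀ j, (ht j₀).1.trans_lt (ht j).2⟩
    obtain ⟨w, hwlen, hwval⟩ := exists_length_eq_bitVal_eq ((hab j₀).trans_le (hb j₀))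
    choose d hd using fun j => exists_take_mem_CP hwlen.le
      (by rw [seg_of_length_eq hwlen, Set.singleton_subset_iff, hwval]; exact hmem j)
    obtain ⟨σ, hσ, hmono⟩ := exists_perm_apply_last_eq_monotone d j₀
    refine ⟨σ, fun j => if j = Fin.last n then w else w.take (d (σ j)), fun j hj => ?_,
      fun j hj => ?_, by simp [Fin.ext_iff, hwlen], by simp [Fin.ext_iff, hwval, ← hσ]; rfl⟩
    · by_cases hlast : j + 1 = n
      · simp only [Fin.ext_iff, Fin.val_last, hlast, if_true, show j ≠ n by omega, if_false]
        exact List.take_prefix _ _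
      · simp only [Fin.ext_iff, Fin.val_last, hlast, show j ≠ n by omega, if_false]
        exact List.take_prefix_take_left
          (hmono _ _ (Fin.mk_le_mk.2 (by omega)) (by simpa [Fin.ext_iff] using hlast))
    · simp only [Fin.ext_iff, Fin.val_last, show j ≠ n by omega, if_false]
      exact hd _
  · rintro ⟨σ, u, hchain, hCP, hlen, hval⟩
    refine ⟨bitVal (u ⟨k - 1, by omega⟩), Set.mem_iInter.2 fun i => ?_⟩
    obtain ⟨j, rfl⟩ := σ.surjective i
    by_cases hj : (j : ℕ) = k - 1
    · rw [show j = ⟨k - 1, by omega⟩ from Fin.ext hj, hval]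
      exact ⟨le_rfl, hab _⟩
    · exact mem_Ico_of_prefix_mem_CP (hCP j (by omega))
        (prefix_of_le_of_chain hchain (show (j : ℕ) ≤ k - 1 by omega)) hlen
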